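/- arXiv:2603.14962 — 2 statements merged into one kernel-verified Lean document; each statement's English description precedes it below -/
import Mathlib

section
/- Let G and H be graphs with vertex sets V₁, V₂. The distance in the corona graph G⊙H between vertices (x,i) and (y,j) (with i,j ∈ {o} ∪ V₂, where o denotes the copy of a vertex of G) equals d_{H̃}(i,j) if x = y, and d_{H̃}(i,o) + d_G(x,y) + d_{H̃}(o,j) if x ≠ y, where H̃ = K₁ + H is the join of a single vertex with H. -/
open Matrix BigOperators

/-- The join `K₁ + H` of a single vertex (labelled `none`) with `H`. -/
def joinOne {V₂ : Type*} (H : SimpleGraph V₂) : SimpleGraph (Option V₂) where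
  Adj i j := (∃ a b, i = some a ∧ j = some b ∧ H.Adj a b) ∨
    (i = none ∧ j ≠ none) ∨ (i ≠ none ∧ j = none)
  symm := by
    constructor
    rintro i j (⟨a, b, ha, hb, hab⟩ | ⟨h1, h2⟩ | ⟨h1, h2⟩)
    · exact Or.inl ⟨b, a, hb, ha, hab.symm⟩
    · exact Or.inr (Or.inr ⟨h2, h1⟩)
    · exact Or.inr (Or.inl ⟨h2, h1⟩)
  loopless := by
    constructor
    rintro i (⟨a, b, ha, hb, hab⟩ | ⟨h1, h2⟩ | ⟨h1, h2⟩)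
    · rw [ha] at hb; injection hb with h; subst h; exact H.irrefl hab
    · exact h2 h1
    · exact h1 h2

/-- The corona graph `G ⊙ H`, on vertex set `V₁ × ({o} ∪ V₂)` with `o = none`. -/
def corona {V₁ V₂ : Type*} (G : SimpleGraph V₁) (H : SimpleGraph V₂) :
    SimpleGraph (V₁ × Option V₂) where
  Adj p q := (p.2 = none ∧ q.2 = none ∧ G.Adj p.1 q.1) ∨
    (p.1 = q.1 ∧ (joinOne H).Adj p.2 q.2)
  symm := by
    constructor
    rintro p q (⟨h1, h2, h3⟩ | ⟨h1, h2⟩)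
    · exact Or.inl ⟨h2, h1, h3.symm⟩
    · exact Or.inr ⟨h1.symm, (joinOne H).adj_symm h2⟩
  loopless := by
    constructor
    rintro p (⟨_, _, h⟩ | ⟨_, h⟩)
    · exact G.irrefl h
    · exact (joinOne H).irrefl h

/-!
The claimed formula is realised by a walk in `G ⊙ H` (leave the copy of `H` through its apex,
follow a geodesic of `G`, enter the target copy), so it bounds the distance from above.
Conversely, as a function of the first vertex it changes by at most one along every edge and
vanishes at the second vertex, so it is bounded by the length of every walk.
-/

namespace SimpleGraph

variable {V : Type*} {G : SimpleGraph V}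

lemma Adj.dist_le_dist_add_one {v w : V} (h : G.Adj v w) (u : V) :
    G.dist v u ≤ G.dist w u + 1 := by
  rw [dist_comm, dist_comm (u := w)]
  have := h.diff_dist_adj (u := u)
  omega

lemma Walk.le_add_length_of_adj {f : V → ℕ}
    (hf : ∀ ⦃u v⦄, G.Adj u v → f u ≤ f v + 1) :
    ∀ {u v : V} (w : G.Walk u v), f u ≤ f v + w.length
  | _, _, .nil => le_rfl
  | _, _, .cons h w => by
    have := w.le_add_length_of_adj hf
    rw [Walk.length_cons]
    linarith [hf h]

lemma Reachable.le_add_dist_of_adj {f : V → ℕ}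
    (hf : ∀ ⦃u v⦄, G.Adj u v → f u ≤ f v + 1) {u v : V} (h : G.Reachable u v) :
    f u ≤ f v + G.dist u v := by
  obtain ⟨w, hw⟩ := h.exists_walk_length_eq_dist
  exact hw ▸ w.le_add_length_of_adj hf

end SimpleGraph

open SimpleGraph

section Corona

variable {V₁ V₂ : Type*} (G : SimpleGraph V₁) (H : SimpleGraph V₂)

lemma joinOne_adj_none_some (a : V₂) : (joinOne H).Adj none (some a) :=
  Or.inr (Or.inl ⟨rfl, Option.some_ne_none a⟩)

lemma joinOne_connected : (joinOne H).Connected := by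
  have h : ∀ k : Option V₂, (joinOne H).Reachable none k := by
    rintro (_ | a)
    · exact Reachable.refl _
    · exact (joinOne_adj_none_some H a).reachable
  exact (connected_iff _).mpr ⟨fun i j => (h i).symm.trans (h j), ⟨none⟩⟩

abbrev coronaFiberHom (x : V₁) : joinOne H →g corona G H where
  toFun i := (x, i)
  map_rel' h := Or.inr ⟨rfl, h⟩

abbrev coronaBaseHom : G →g corona G H where
  toFun x := (x, none)
  map_rel' h := Or.inl ⟨rfl, rfl, h⟩

variable [DecidableEq V₁]

noncomputable def coronaDist (p q : V₁ × Option V₂) : ℕ :=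
  if p.1 = q.1 then (joinOne H).dist p.2 q.2
  else (joinOne H).dist p.2 none + G.dist p.1 q.1 + (joinOne H).dist none q.2

lemma coronaDist_none (x : V₁) (q : V₁ × Option V₂) :
    coronaDist G H (x, none) q = G.dist x q.1 + (joinOne H).dist none q.2 := by
  by_cases hx : x = q.1 <;> simp [coronaDist, hx]

@[simp]
lemma coronaDist_self (p : V₁ × Option V₂) : coronaDist G H p p = 0 := by
  simp [coronaDist]

lemma coronaDist_le_of_adj (q : V₁ × Option V₂) ⦃p p' : V₁ × Option V₂⦄
    (h : (corona G H).Adj p p') : coronaDist G H p q ≤ coronaDist G H p' q + 1 := by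
  obtain ⟨hp, hp', hG⟩ | ⟨hx, hJ⟩ := h
  · obtain ⟨x, _⟩ := p
    obtain ⟨x', _⟩ := p'
    subst hp hp'
    rw [coronaDist_none, coronaDist_none]
    linarith [hG.dist_le_dist_add_one q.1]
  · unfold coronaDist
    rw [hx]
    split_ifs
    · exact hJ.dist_le_dist_add_one q.2
    · linarith [hJ.dist_le_dist_add_one none]

lemma exists_walk_length_eq_coronaDist (hG : G.Connected) (p q : V₁ × Option V₂) :
    ∃ w : (corona G H).Walk p q, w.length = coronaDist G H p q := by
  obtain ⟨x, i⟩ := p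
  obtain ⟨y, j⟩ := q
  have hJ := joinOne_connected H
  unfold coronaDist
  split_ifs with hxy
  · obtain rfl : x = y := hxy
    obtain ⟨w, hw⟩ := hJ.exists_walk_length_eq_dist i j
    exact ⟨w.map (coronaFiberHom G H x), by rw [Walk.length_map, hw]⟩
  · obtain ⟨w₁, hw₁⟩ := hJ.exists_walk_length_eq_dist i none
    obtain ⟨w₂, hw₂⟩ := hG.exists_walk_length_eq_dist x y
    obtain ⟨w₃, hw₃⟩ := hJ.exists_walk_length_eq_dist none j
    refine ⟨((w₁.map (coronaFiberHom G H x)).append (w₂.map (coronaBaseHom G H))).append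
      (w₃.map (coronaFiberHom G H y)), ?_⟩
    simp only [Walk.length_append, Walk.length_map]
    omega

theorem corona_dist_eq_coronaDist (hG : G.Connected) (p q : V₁ × Option V₂) :
    (corona G H).dist p q = coronaDist G H p q := by
  obtain ⟨w, hw⟩ := exists_walk_length_eq_coronaDist G H hG p q
  refine le_antisymm (hw ▸ dist_le w) ?_
  have := Reachable.le_add_dist_of_adj (f := (coronaDist G H · q))
    (coronaDist_le_of_adj G H q) ⟨w⟩
  rwa [coronaDist_self, zero_add] at this

end Corona

theorem corona_dist_general {V₁ V₂ : Type*} [DecidableEq V₁]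
    (G : SimpleGraph V₁) (H : SimpleGraph V₂) (hG : G.Connected)
    (x y : V₁) (i j : Option V₂) :
    (corona G H).dist (x, i) (y, j) =
      if x = y then (joinOne H).dist i j
      else (joinOne H).dist i none + G.dist x y + (joinOne H).dist none j :=
  corona_dist_eq_coronaDist G H hG (x, i) (y, j)

/-- The distance in the corona graph `G ⊙ H` between `(x,i)` and `(y,j)`
equals `d_{H̃}(i,j)` if `x = y`, and `d_{H̃}(i,o) + d_G(x,y) + d_{H̃}(o,j)` if `x ≠ y`,
where `H̃ = K₁ + H` (with the extra vertex `o = none`). -/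
theorem corona_dist {V₁ V₂ : Type*} [Fintype V₁] [Fintype V₂] [DecidableEq V₁]
    (G : SimpleGraph V₁) (H : SimpleGraph V₂) (hG : G.Connected)
    (x y : V₁) (i j : Option V₂) :
    (corona G H).dist (x, i) (y, j) =
      if x = y then (joinOne H).dist i j
      else (joinOne H).dist i none + G.dist x y + (joinOne H).dist none j :=
  corona_dist_general G H hG x y i j
end

section
/- Let H be a κ-regular graph on n vertices and let γ₃ < 0 with γ₃(n+1)+κ+2 ≠ 0. If (γ₃² + γ₃(κ+2))/(γ₃(n+1)+κ+2) < q < 0 and the larger root ψ_H⁻¹(q) of λ² − ((n+1)q−(κ+2))λ − (κ+2)q = 0 is well-defined, then γ₃ < ψ_H⁻¹(q). -/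
/-!
The larger root of `f(λ) = λ² − ((n+1)q − (κ+2))λ − (κ+2)q` exceeds every point where `f` is
negative, so it suffices to exhibit a point `t ≥ γ₃` with `f(t) < 0`. Since
`f(t) = t² + (κ+2)t − q(t(n+1) + κ+2)`, the hypothesis on `q` says exactly `f(γ₃) < 0` when
`γ₃(n+1) + κ + 2 > 0`. Otherwise `γ₃` lies left of the pole `t = −(κ+2)/(n+1)` of `ψ_H`, where
`f(t) = t(t + κ + 2) < 0` for every `q`.
-/

theorem lt_half_add_sqrt_of_sq_sub_mul_sub_neg {s p t : ℝ} (h : t ^ 2 - s * t - p < 0) :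
    t < (1 / 2) * (s + Real.sqrt (s ^ 2 + 4 * p)) := by
  have hsq : (2 * t - s) ^ 2 < s ^ 2 + 4 * p := by nlinarith
  linarith [Real.lt_sqrt_of_sq_lt hsq]

theorem gamma3_lt_psi_inv_general {V₂ : Type*} [Fintype V₂]
    (κ : ℕ) (hn : 1 ≤ Fintype.card V₂) (γ₃ q : ℝ)
    (h1 : (γ₃ ^ 2 + γ₃ * ((κ : ℝ) + 2)) / (γ₃ * ((Fintype.card V₂ : ℝ) + 1) + (κ : ℝ) + 2) < q) :
    γ₃ < (1 / 2) * (((Fintype.card V₂ : ℝ) + 1) * q - ((κ : ℝ) + 2) +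
      Real.sqrt ((((Fintype.card V₂ : ℝ) + 1) * q - ((κ : ℝ) + 2)) ^ 2
        + 4 * ((κ : ℝ) + 2) * q)) := by
  set N : ℝ := (Fintype.card V₂ : ℝ)
  set c : ℝ := (κ : ℝ) + 2
  have hN : 0 < N := Nat.cast_pos.mpr hn
  have hc : 0 < c := by positivity
  have lt_root (t : ℝ) (ht : t ^ 2 + c * t < q * (t * (N + 1) + c)) :
      t < (1 / 2) * ((N + 1) * q - c + Real.sqrt (((N + 1) * q - c) ^ 2 + 4 * c * q)) := by
    rw [mul_assoc 4]
    exact lt_half_add_sqrt_of_sq_sub_mul_sub_neg (by linarith)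
  rcases lt_or_ge 0 (γ₃ * (N + 1) + c) with hpos | hnonpos
  · rw [add_assoc, div_lt_iff₀ (by linarith)] at h1
    exact lt_root γ₃ (by linarith)
  · set pole := -c / (N + 1)
    have hpole : pole * (N + 1) + c = 0 := by
      rw [div_mul_cancel₀ _ (by positivity), neg_add_cancel]
    have hγ_le : γ₃ ≤ pole := by rw [le_div_iff₀ (by linarith)]; linarith
    have hpole_neg : pole < 0 := div_neg_of_neg_of_pos (by linarith) (by linarith)
    have hpole_gt : -c < pole := by rw [lt_div_iff₀ (by linarith)]; nlinarith
    refine hγ_le.trans_lt (lt_root pole ?_)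
    rw [hpole, mul_zero]
    nlinarith

/-- For a `κ`-regular graph `H` on `n` vertices, if `γ₃ < 0`,
`γ₃(n+1)+κ+2 ≠ 0`, and `(γ₃² + γ₃(κ+2))/(γ₃(n+1)+κ+2) < q < 0` with the larger root
`ψ_H⁻¹(q)` well-defined (nonnegative discriminant), then `γ₃ < ψ_H⁻¹(q)`. -/
theorem gamma3_lt_psi_inv {V₂ : Type*} [Fintype V₂] [DecidableEq V₂]
    (H : SimpleGraph V₂) [DecidableRel H.Adj] (κ : ℕ) (hreg : H.IsRegularOfDegree κ)
    (hn : 1 ≤ Fintype.card V₂) (γ₃ q : ℝ) (hγ : γ₃ < 0)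
    (hden : γ₃ * ((Fintype.card V₂ : ℝ) + 1) + (κ : ℝ) + 2 ≠ 0)
    (h1 : (γ₃ ^ 2 + γ₃ * ((κ : ℝ) + 2)) / (γ₃ * ((Fintype.card V₂ : ℝ) + 1) + (κ : ℝ) + 2) < q)
    (h2 : q < 0)
    (hdisc : 0 ≤ (((Fintype.card V₂ : ℝ) + 1) * q - ((κ : ℝ) + 2)) ^ 2
      + 4 * ((κ : ℝ) + 2) * q) :
    γ₃ < (1 / 2) * (((Fintype.card V₂ : ℝ) + 1) * q - ((κ : ℝ) + 2) +
      Real.sqrt ((((Fintype.card V₂ : ℝ) + 1) * q - ((κ : ℝ) + 2)) ^ 2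
        + 4 * ((κ : ℝ) + 2) * q)) :=
  gamma3_lt_psi_inv_general κ hn γ₃ q h1
end
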